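/- Consider a multiset of n natural numbers, all initially 0, evolving by steps in which two equal elements v with v + 1 ≤ n - 1 are selected and one is replaced by v + 1. No infinite sequence of steps exists: the process terminates after exactly n(n-1)/2 steps, at which point the multiset is {0, 1, ..., n-1}. -/

import Mathlib

/-!
The number of elements `≥ k` never exceeds `n - k`: a step raising a copy of `v` to `v + 1`
only changes this count for `k = v + 1`, and there the other copy of `v` leaves room.
So every reachable state has all elements below `n`, while the sum grows by one per step;
this bounds the length of every run. In a terminal state no value occurs twice, hence its
`n` elements are exactly `0, …, n - 1`, and the number of steps is their sum.
-/

/-- One step of the bounded id-assignment process. -/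
def IdStep (n : ℕ) (M M' : Multiset ℕ) : Prop :=
  ∃ v, v + 1 ≤ n - 1 ∧ 2 ≤ M.count v ∧ M' = (v + 1) ::ₘ M.erase v

theorem Multiset.countP_le_eq_count_add_countP_succ_le (M : Multiset ℕ) (v : ℕ) :
    M.countP (v ≤ ·) = M.count v + M.countP (v + 1 ≤ ·) := by
  induction M using Multiset.induction_on with
  | empty => simp
  | cons a s ih =>
    simp only [Multiset.countP_cons, Multiset.count_cons, ih]
    split_ifs <;> omega

def TailBounded (n : ℕ) (M : Multiset ℕ) : Prop :=
  ∀ k, M.countP (k ≤ ·) ≤ n - k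

theorem tailBounded_replicate_zero (n : ℕ) : TailBounded n (Multiset.replicate n 0) := by
  intro k
  rcases Nat.eq_zero_or_pos k with rfl | hk
  · simp
  · rw [Multiset.countP_eq_zero.mpr fun x hx => by rw [Multiset.eq_of_mem_replicate hx]; omega]
    exact Nat.zero_le _

namespace TailBounded

variable {n : ℕ} {M : Multiset ℕ}

theorem count_le (h : TailBounded n M) (v : ℕ) : M.count v ≤ n - v :=
  (M.countP_le_eq_count_add_countP_succ_le v ▸ Nat.le_add_right _ _).trans (h v)

theorem lt_of_mem (h : TailBounded n M) {x : ℕ} (hx : x ∈ M) : x < n := by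
  have := (Multiset.countP_pos_of_mem (p := (x ≤ ·)) hx le_rfl).trans_le (h x)
  omega

theorem sum_le (h : TailBounded n M) : M.sum ≤ M.card * (n - 1) := by
  simpa using M.sum_le_card_nsmul (n - 1) fun x hx => Nat.le_sub_one_of_lt (h.lt_of_mem hx)

end TailBounded

namespace IdStep

variable {n : ℕ} {M M' : Multiset ℕ}

theorem exists_cons_eq (h : IdStep n M M') :
    ∃ v N, v + 2 ≤ n ∧ 2 ≤ M.count v ∧ M = v ::ₘ N ∧ M' = (v + 1) ::ₘ N := by
  obtain ⟨v, hv, hc, rfl⟩ := h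
  have hmem : v ∈ M := Multiset.count_pos.mp (by omega)
  exact ⟨v, M.erase v, by omega, hc, (Multiset.cons_erase hmem).symm, rfl⟩

theorem card_eq (h : IdStep n M M') : M'.card = M.card := by
  obtain ⟨v, N, -, -, rfl, rfl⟩ := h.exists_cons_eq
  simp

theorem sum_eq (h : IdStep n M M') : M'.sum = M.sum + 1 := by
  obtain ⟨v, N, -, -, rfl, rfl⟩ := h.exists_cons_eq
  simp only [Multiset.sum_cons]
  ring

theorem tailBounded (h : IdStep n M M') (hM : TailBounded n M) : TailBounded n M' := by
  obtain ⟨v, N, -, hc, rfl, rfl⟩ := h.exists_cons_eq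
  intro k
  have hk := hM k
  simp only [Multiset.countP_cons] at hk ⊢
  rcases lt_trichotomy k (v + 1) with hlt | rfl | hgt
  · simp only [show k ≤ v by omega, show k ≤ v + 1 by omega, if_true] at hk ⊢
    exact hk
  · have hv := hM v
    rw [Multiset.countP_le_eq_count_add_countP_succ_le, Multiset.countP_cons] at hv
    simp only [Nat.not_succ_le_self, le_refl, if_true, if_false] at hv ⊢
    omega
  · simp only [show ¬k ≤ v by omega, show ¬k ≤ v + 1 by omega, if_false] at hk ⊢
    exact hk

end IdStep

theorem IdStep.run_invariants {n : ℕ} {f : ℕ → Multiset ℕ} (hf0 : f 0 = Multiset.replicate n 0)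
    {L : ℕ} (hsteps : ∀ i < L, IdStep n (f i) (f (i + 1))) :
    (f L).card = n ∧ (f L).sum = L ∧ TailBounded n (f L) := by
  induction L with
  | zero => simp [hf0, tailBounded_replicate_zero]
  | succ m ih =>
    obtain ⟨hcard, hsum, hT⟩ := ih fun i hi => hsteps i (by omega)
    have hs := hsteps m (by omega)
    exact ⟨hs.card_eq.trans hcard, by rw [hs.sum_eq, hsum], hs.tailBounded hT⟩

theorem TailBounded.eq_range_of_terminal {n : ℕ} {M : Multiset ℕ} (h : TailBounded n M)
    (hcard : M.card = n) (hterm : ∀ M', ¬ IdStep n M M') : M = Multiset.range n := by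
  have hnodup : M.Nodup := Multiset.nodup_iff_count_le_one.mpr fun v => by
    by_cases hv : v + 2 ≤ n
    · by_contra hc
      exact hterm _ ⟨v, by omega, by omega, rfl⟩
    · have := h.count_le v
      omega
  have hsub : M ⊆ Multiset.range n := fun x hx => Multiset.mem_range.mpr (h.lt_of_mem hx)
  exact Multiset.eq_of_le_of_card_le ((Multiset.le_iff_subset hnodup).mpr hsub) (by simp [hcard])

theorem Multiset.sum_range_id (n : ℕ) : (Multiset.range n).sum = n * (n - 1) / 2 := by
  rw [← Finset.sum_range_id, Finset.sum_eq_multiset_sum, Finset.range_val, Multiset.map_id']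

theorem id_process_terminates_general (n : ℕ) :
    (¬ ∃ f : ℕ → Multiset ℕ, f 0 = Multiset.replicate n 0 ∧
        ∀ i, IdStep n (f i) (f (i + 1))) ∧
    (∀ (f : ℕ → Multiset ℕ) (L : ℕ), f 0 = Multiset.replicate n 0 →
        (∀ i < L, IdStep n (f i) (f (i + 1))) →
        (∀ M', ¬ IdStep n (f L) M') →
        L = n * (n - 1) / 2 ∧ f L = Multiset.range n) := by
  constructor
  · rintro ⟨f, hf0, hsteps⟩
    obtain ⟨hcard, hsum, hT⟩ :=
      IdStep.run_invariants hf0 (L := n * (n - 1) + 1) fun i _ => hsteps i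
    have := hT.sum_le
    rw [hcard, hsum] at this
    omega
  · intro f L hf0 hsteps hterm
    obtain ⟨hcard, hsum, hT⟩ := IdStep.run_invariants hf0 hsteps
    have hrange := hT.eq_range_of_terminal hcard hterm
    exact ⟨by rw [← hsum, hrange, Multiset.sum_range_id], hrange⟩

theorem id_process_terminates (n : ℕ) (hn : 1 ≤ n) :
    (¬ ∃ f : ℕ → Multiset ℕ, f 0 = Multiset.replicate n 0 ∧
        ∀ i, IdStep n (f i) (f (i + 1))) ∧
    (∀ (f : ℕ → Multiset ℕ) (L : ℕ), f 0 = Multiset.replicate n 0 →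
        (∀ i < L, IdStep n (f i) (f (i + 1))) →
        (∀ M', ¬ IdStep n (f L) M') →
        L = n * (n - 1) / 2 ∧ f L = Multiset.range n) :=
  id_process_terminates_general n
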